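/- Let m, t, a be positive integers with gcd(ta, m) = gcd(t, m), and let ζ_m = e^{2πi/m}. Then the product of (1 − ζ_m^{jta})/(1 − ζ_m^{jt}) over all j in {1, …, m} with m ∤ jt, multiplied by the product of (1 + ζ_m^{jt} + ζ_m^{2jt} + ⋯ + ζ_m^{(a−1)jt}) over all j in {1, …, m} with m ∣ jt, equals a^{gcd(m, t)}. -/

import Mathlib

/-!
Write `d = gcd(m, s)` and `n = m / d`. Since `ζ^s` is a primitive `n`-th root of unity and
`m ∣ js ↔ n ∣ j`, the factors `1 - ζ^{js}` with `m ∤ js` run `d` times over the `1 - ξ` with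
`ξ` a nontrivial `n`-th root of unity, whose product is `n`; so their product is `n^d`, a value
that depends on `s` only through `gcd(m, s)`. Hence numerator and denominator of the first product
agree. In the second product every geometric sum has all terms `1`, hence equals `a`, and there
are exactly `gcd(m, t)` indices `j ∈ [1, m]` with `m ∣ jt`.
-/

open Finset Complex

theorem Function.Periodic.prod_range_mul {M : Type*} [CommMonoid M] {f : ℕ → M} {n : ℕ}
    (hf : Function.Periodic f n) (d : ℕ) :
    ∏ j ∈ range (d * n), f j = (∏ j ∈ range n, f j) ^ d := by
  induction d with
  | zero => simp
  | succ d ih =>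
    rw [Nat.succ_mul, prod_range_add, ih, pow_succ]
    congr 1
    refine prod_congr rfl fun j _ => ?_
    rw [add_comm]
    exact hf.nat_mul d j

theorem Finset.prod_Icc_one_eq_prod_range {M : Type*} [CommMonoid M] (f : ℕ → M) (N : ℕ) :
    ∏ j ∈ Icc 1 N, f j = ∏ j ∈ range N, f (j + 1) := by
  rw [range_eq_Ico, prod_Ico_add', zero_add, Ico_add_one_right_eq_Icc]

theorem Nat.dvd_mul_iff_div_gcd_dvd {m s : ℕ} (hm : 0 < m) (j : ℕ) :
    m ∣ j * s ↔ m / m.gcd s ∣ j := by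
  have hg : 0 < m.gcd s := Nat.gcd_pos_of_pos_left s hm
  calc m ∣ j * s ↔ m / m.gcd s * m.gcd s ∣ j * (s / m.gcd s) * m.gcd s := by
        rw [Nat.div_mul_cancel (m.gcd_dvd_left s), mul_assoc,
          Nat.div_mul_cancel (m.gcd_dvd_right s)]
    _ ↔ m / m.gcd s ∣ j * (s / m.gcd s) := Nat.mul_dvd_mul_iff_right hg
    _ ↔ m / m.gcd s ∣ j := (Nat.coprime_div_gcd_div_gcd hg).dvd_mul_right

theorem Nat.card_Icc_filter_dvd_mul {m : ℕ} (hm : 0 < m) (s : ℕ) :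
    #{j ∈ Icc 1 m | m ∣ j * s} = m.gcd s := by
  simp_rw [Nat.dvd_mul_iff_div_gcd_dvd hm]
  rw [← zero_add 1, Icc_add_one_left_eq_Ioc, Nat.Ioc_filter_dvd_card_eq_div,
    Nat.div_div_self (m.gcd_dvd_left s) hm.ne']

namespace IsPrimitiveRoot

theorem pow_div_gcd {M : Type*} [CommMonoid M] {ζ : M} {m : ℕ} (hζ : IsPrimitiveRoot ζ m)
    (hm : m ≠ 0) (s : ℕ) : IsPrimitiveRoot (ζ ^ s) (m / m.gcd s) := by
  have h := IsOfFinOrder.orderOf_pow ζ s (hζ.isOfFinOrder hm)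
  rw [← hζ.eq_orderOf] at h
  exact h ▸ IsPrimitiveRoot.orderOf (ζ ^ s)

variable {R : Type*} [CommRing R] [IsDomain R]

theorem prod_Icc_filter_one_sub_pow {ξ : R} {n : ℕ} (hξ : IsPrimitiveRoot ξ n)
    (hn : 0 < n) (d : ℕ) :
    ∏ j ∈ Icc 1 (d * n) with ¬ n ∣ j, (1 - ξ ^ j) = (n : R) ^ d := by
  have hper : Function.Periodic (fun j => if ¬ n ∣ j + 1 then 1 - ξ ^ (j + 1) else 1) n :=
    fun j => by simp [add_right_comm j n 1, pow_add, hξ.pow_eq_one]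
  rw [prod_filter, prod_Icc_one_eq_prod_range, hper.prod_range_mul]
  obtain ⟨k, rfl⟩ := Nat.exists_eq_add_one_of_ne_zero hn.ne'
  rw [prod_range_succ, if_neg (not_not.2 dvd_rfl), mul_one, Nat.cast_add_one,
    ← hξ.prod_one_sub_pow_eq_order]
  congr 1
  refine prod_congr rfl fun j hj => if_pos (Nat.not_dvd_of_pos_of_lt j.succ_pos ?_)
  simpa using hj

theorem prod_Icc_filter_one_sub_pow_mul {ζ : R} {m : ℕ} (hζ : IsPrimitiveRoot ζ m)
    (hm : 0 < m) (s : ℕ) :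
    ∏ j ∈ Icc 1 m with ¬ m ∣ j * s, (1 - ζ ^ (j * s)) =
      ((m / m.gcd s : ℕ) : R) ^ m.gcd s := by
  have hn : 0 < m / m.gcd s := Nat.div_pos (Nat.gcd_le_left s hm) (Nat.gcd_pos_of_pos_left s hm)
  simp_rw [Nat.dvd_mul_iff_div_gcd_dvd hm, mul_comm _ s, pow_mul]
  have h := (hζ.pow_div_gcd hm.ne' s).prod_Icc_filter_one_sub_pow hn (m.gcd s)
  rwa [Nat.mul_div_cancel' (m.gcd_dvd_left s)] at h

end IsPrimitiveRoot

theorem prod_ratio_eq_pow_general (m t a : ℕ) (hm : 0 < m)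
    (hgcd : Nat.gcd (t * a) m = Nat.gcd t m) :
    (∏ j ∈ (Finset.Icc 1 m).filter (fun j => ¬ m ∣ j * t),
        (1 - Complex.exp (2 * Real.pi * Complex.I / m) ^ (j * t * a)) /
          (1 - Complex.exp (2 * Real.pi * Complex.I / m) ^ (j * t))) *
      (∏ j ∈ (Finset.Icc 1 m).filter (fun j => m ∣ j * t),
        ∑ k ∈ Finset.range a, Complex.exp (2 * Real.pi * Complex.I / m) ^ (k * j * t)) =
      (a : ℂ) ^ (Nat.gcd m t) := by
  set ζ := Complex.exp (2 * Real.pi * Complex.I / m)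
  have hζ : IsPrimitiveRoot ζ m := Complex.isPrimitiveRoot_exp m hm.ne'
  have hgcd' : m.gcd (t * a) = m.gcd t := by rw [Nat.gcd_comm, hgcd, Nat.gcd_comm]
  have hnum : ∏ j ∈ Icc 1 m with ¬ m ∣ j * t, (1 - ζ ^ (j * t * a)) =
      ∏ j ∈ Icc 1 m with ¬ m ∣ j * (t * a), (1 - ζ ^ (j * (t * a))) := by
    refine prod_congr (filter_congr fun j _ => ?_) fun j _ => by rw [mul_assoc]
    rw [Nat.dvd_mul_iff_div_gcd_dvd hm, Nat.dvd_mul_iff_div_gcd_dvd hm, hgcd']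
  have hgeom (j : ℕ) (hj : j ∈ (Icc 1 m).filter (m ∣ · * t)) :
      ∑ k ∈ range a, ζ ^ (k * j * t) = a := by
    simp [mul_assoc, pow_mul', (hζ.pow_eq_one_iff_dvd _).2 (mem_filter.1 hj).2]
  have hne : ((m / m.gcd t : ℕ) : ℂ) ^ m.gcd t ≠ 0 :=
    pow_ne_zero _ (Nat.cast_ne_zero.2 (Nat.div_pos (Nat.gcd_le_left t hm)
      (Nat.gcd_pos_of_pos_left t hm)).ne')
  rw [prod_div_distrib, hnum, hζ.prod_Icc_filter_one_sub_pow_mul hm,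
    hζ.prod_Icc_filter_one_sub_pow_mul hm, hgcd', div_self hne, one_mul,
    prod_congr rfl hgeom, prod_const, Nat.card_Icc_filter_dvd_mul hm]

/-- If `gcd(ta, m) = gcd(t, m)` then
`∏_{1≤j≤m, m∤jt} (1 − ζ_m^{jta})/(1 − ζ_m^{jt}) · ∏_{1≤j≤m, m∣jt} (1 + ζ_m^{jt} + ⋯ + ζ_m^{(a−1)jt})
  = a^{gcd(m,t)}` where `ζ_m = e^{2πi/m}`. -/
theorem prod_ratio_eq_pow (m t a : ℕ) (hm : 0 < m) (ht : 0 < t) (ha : 0 < a)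
    (hgcd : Nat.gcd (t * a) m = Nat.gcd t m) :
    (∏ j ∈ (Finset.Icc 1 m).filter (fun j => ¬ m ∣ j * t),
        (1 - Complex.exp (2 * Real.pi * Complex.I / m) ^ (j * t * a)) /
          (1 - Complex.exp (2 * Real.pi * Complex.I / m) ^ (j * t))) *
      (∏ j ∈ (Finset.Icc 1 m).filter (fun j => m ∣ j * t),
        ∑ k ∈ Finset.range a, Complex.exp (2 * Real.pi * Complex.I / m) ^ (k * j * t)) =
      (a : ℂ) ^ (Nat.gcd m t) :=
  prod_ratio_eq_pow_general m t a hm hgcd
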